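/- Let A > 0, C > 0, C₂ > 0, and let β > 0 and β′ > 0. If the positive pair (ξ₁, ξ₂) satisfies the equilibrium system C·A/ξ₁ = G( β·ξ₂·(1/A + 1/(2ξ₁)) ) and ξ₂ = (A/β)·( 1 + C₂ − A/(A + 2ξ₁) ) for the rate β, then the pair (ξ₁, β·ξ₂/β′) satisfies the same system with β replaced by β′. In particular, the unique equilibrium value ξ̄₁ does not depend on β, and β·ξ̄₂ does not depend on β. -/

import Mathlib

/-- The function e(x) = (2/x²)·eˣ − (1 + 2/x + 2/x²). -/
noncomputable def eFun (x : ℝ) : ℝ :=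
  2 / x ^ 2 * Real.exp x - (1 + 2 / x + 2 / x ^ 2)

/-- The function g(x) for a parameter C. -/
noncomputable def gFun (C x : ℝ) : ℝ :=
  (1 / 2) * (-(2 * C - 1 + x * (2 * C + 1)) +
    Real.sqrt ((2 * C - 1 + x * (2 * C + 1)) ^ 2 + 8 * C * (x + 1)))

/-- The composite G = g ∘ e. -/
noncomputable def GFun (C x : ℝ) : ℝ := gFun C (eFun x)

/-- The equilibrium system at claim rate β: reinsurer 1's and reinsurer 2's
first-order conditions. -/
def EqSystem (A C C₂ β ξ₁ ξ₂ : ℝ) : Prop :=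
  C * A / ξ₁ = GFun C (β * ξ₂ * (1 / A + 1 / (2 * ξ₁))) ∧
  ξ₂ = (A / β) * (1 + C₂ - A / (A + 2 * ξ₁))

/-!
The system depends on `β` and `ξ₂` only through `β ξ₂`, which the second condition expresses in
terms of `ξ₁`. Substituting it into the first condition leaves one equation in `ξ₁`,
`C A / ξ₁ = G (1 + C₂ + C₂ A / (2 ξ₁))`, whose left side decreases and whose right side increases
with `ξ₁`. The latter holds because `G = g ∘ e` is decreasing: `e` increases since
`e'(x) = 2 ((x - 2) eˣ + x + 2) / x³ > 0`, and `g x` is the positive root of a quadratic whose value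
at any fixed `y > 2C / (2C + 1)` increases with `x`.
-/

open Real Set

/-- `gFun C x` is the positive root of this quadratic in `y`. -/
def gQuad (C x y : ℝ) : ℝ := (y + 2 * C) * (y - 1) + x * ((2 * C + 1) * y - 2 * C)

lemma exists_gQuad_eq_mul (C : ℝ) {x : ℝ} (hC : 0 < C) (hx : -1 < x) :
    ∃ r < 0, ∀ y, gQuad C x y = (y - gFun C x) * (y - r) := by
  set b := 2 * C - 1 + x * (2 * C + 1)
  have hD : b ^ 2 < b ^ 2 + 8 * C * (x + 1) := by nlinarith
  set s := √(b ^ 2 + 8 * C * (x + 1))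
  have hs : s ^ 2 = b ^ 2 + 8 * C * (x + 1) := sq_sqrt (by nlinarith)
  have hbs : |b| < s := by
    simpa only [sqrt_sq_eq_abs] using sqrt_lt_sqrt (sq_nonneg b) hD
  have hg : gFun C x = (s - b) / 2 := by simp only [gFun, b, s]; ring
  refine ⟨-(s + b) / 2, by linarith [neg_abs_le b], fun y => ?_⟩
  rw [hg, gQuad]
  linear_combination (1 / 4 : ℝ) * hs

lemma gQuad_neg_iff {C x y : ℝ} (hC : 0 < C) (hx : -1 < x) (hy : 0 ≤ y) :
    gQuad C x y < 0 ↔ y < gFun C x := by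
  obtain ⟨r, hr, hq⟩ := exists_gQuad_eq_mul C hC hx
  rw [hq, ← neg_pos, ← neg_mul, mul_pos_iff_of_pos_right (by linarith), neg_pos, sub_neg]

lemma gQuad_pos_iff {C x y : ℝ} (hC : 0 < C) (hx : -1 < x) (hy : 0 ≤ y) :
    0 < gQuad C x y ↔ gFun C x < y := by
  obtain ⟨r, hr, hq⟩ := exists_gQuad_eq_mul C hC hx
  rw [hq, mul_pos_iff_of_pos_right (by linarith), sub_pos]

lemma div_two_mul_add_one_lt_gFun {C x : ℝ} (hC : 0 < C) (hx : -1 < x) :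
    2 * C / (2 * C + 1) < gFun C x := by
  rw [← gQuad_neg_iff hC hx (by positivity), gQuad]
  have h1 : 2 * C / (2 * C + 1) < 1 := by rw [div_lt_one (by positivity)]; linarith
  rw [mul_div_cancel₀ _ (by positivity), sub_self, mul_zero, add_zero]
  exact mul_neg_of_pos_of_neg (by positivity) (by linarith)

-- At `y = g(x₁)` the quadratic for `x₂` equals `(x₂ - x₁)((2C+1)y - 2C) > 0`.
lemma gFun_strictAntiOn {C : ℝ} (hC : 0 < C) : StrictAntiOn (gFun C) (Ioi (-1)) := by
  intro x₁ hx₁ x₂ hx₂ hlt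
  have hy := div_two_mul_add_one_lt_gFun hC hx₁
  rw [← gQuad_pos_iff hC hx₂ (le_trans (by positivity) hy.le)]
  have hq₁ : gQuad C x₁ (gFun C x₁) = 0 := by
    obtain ⟨r, -, hq⟩ := exists_gQuad_eq_mul C hC hx₁
    rw [hq, sub_self, zero_mul]
  have : 0 < (x₂ - x₁) * ((2 * C + 1) * gFun C x₁ - 2 * C) :=
    mul_pos (by linarith) (by rwa [div_lt_iff₀' (by positivity), ← sub_pos] at hy)
  unfold gQuad at hq₁ ⊢
  linear_combination this - hq₁

lemma eFun_add_one {x : ℝ} (hx : x ≠ 0) : eFun x + 1 = 2 * (exp x - (x + 1)) / x ^ 2 := by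
  unfold eFun
  field_simp
  ring

lemma neg_one_lt_eFun {x : ℝ} (hx : x ≠ 0) : -1 < eFun x := by
  have : 0 < eFun x + 1 := by
    rw [eFun_add_one hx]
    have := add_one_lt_exp hx
    exact div_pos (by linarith) (by positivity)
  linarith

lemma sub_two_mul_exp_add_pos {x : ℝ} (hx : 0 < x) : 0 < (x - 2) * exp x + x + 2 := by
  have hderiv (y : ℝ) : HasDerivAt (fun y => (y - 2) * exp y + y + 2) ((y - 1) * exp y + 1) y := by
    refine (((((hasDerivAt_id' y).sub_const 2).mul (hasDerivAt_exp y)).add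
      (hasDerivAt_id' y)).add_const 2).congr_deriv ?_
    ring
  -- the derivative is positive because `exp (-y) > 1 - y`
  have hpos : StrictMonoOn (fun y => (y - 2) * exp y + y + 2) (Ici 0) := by
    refine strictMonoOn_of_deriv_pos (convex_Ici 0) (by fun_prop) fun y hy => ?_
    rw [interior_Ici, mem_Ioi] at hy
    have h := add_one_lt_exp (neg_ne_zero.2 hy.ne')
    rw [← mul_lt_mul_iff_left₀ (exp_pos y), ← exp_add, neg_add_cancel, exp_zero] at h
    rw [(hderiv y).deriv]
    linarith
  simpa using hpos self_mem_Ici hx.le hx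

lemma hasDerivAt_eFun {x : ℝ} (hx : x ≠ 0) :
    HasDerivAt eFun (2 * ((x - 2) * exp x + x + 2) / x ^ 3) x := by
  have hsq : (x ^ 2) ≠ 0 := pow_ne_zero 2 hx
  have h2 := (hasDerivAt_const x (2 : ℝ)).div (hasDerivAt_pow 2 x) hsq
  have h1 := (hasDerivAt_const x (2 : ℝ)).div (hasDerivAt_id' x) hx
  refine ((h2.mul (hasDerivAt_exp x)).sub (((hasDerivAt_const x 1).add h1).add h2)).congr_deriv ?_
  simp only [Pi.div_apply]
  field_simp
  ring

lemma eFun_strictMonoOn : StrictMonoOn eFun (Ioi 0) := by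
  refine strictMonoOn_of_deriv_pos (convex_Ioi 0)
    (fun x hx => (hasDerivAt_eFun (ne_of_gt hx)).continuousAt.continuousWithinAt) fun x hx => ?_
  rw [interior_Ioi, mem_Ioi] at hx
  rw [(hasDerivAt_eFun hx.ne').deriv]
  have := sub_two_mul_exp_add_pos hx
  positivity

lemma GFun_strictAntiOn {C : ℝ} (hC : 0 < C) : StrictAntiOn (GFun C) (Ioi 0) :=
  (gFun_strictAntiOn hC).comp_strictMonoOn eFun_strictMonoOn fun _ hx => neg_one_lt_eFun (ne_of_gt hx)

lemma GFun_reduced_le {A C C₂ ξ η : ℝ} (hA : 0 < A) (hC : 0 < C) (hC₂ : 0 ≤ C₂) (hξ : 0 < ξ)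
    (hle : ξ ≤ η) :
    GFun C (1 + C₂ + C₂ * A / (2 * ξ)) ≤ GFun C (1 + C₂ + C₂ * A / (2 * η)) := by
  have hη : 0 < η := hξ.trans_le hle
  refine (GFun_strictAntiOn hC).antitoneOn (mem_Ioi.2 (by positivity))
    (mem_Ioi.2 (by positivity)) ?_
  gcongr

lemma eqSystem_iff_rate_one {A C C₂ β ξ₁ ξ₂ : ℝ} (hβ : β ≠ 0) :
    EqSystem A C C₂ β ξ₁ ξ₂ ↔ EqSystem A C C₂ 1 ξ₁ (β * ξ₂) := by
  rw [EqSystem, EqSystem, one_mul, div_one, div_mul_eq_mul_div, eq_div_iff hβ, mul_comm ξ₂]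

lemma EqSystem.reduced {A C C₂ ξ₁ ξ₂ : ℝ} (hA : 0 < A) (hξ₁ : 0 < ξ₁)
    (h : EqSystem A C C₂ 1 ξ₁ ξ₂) : C * A / ξ₁ = GFun C (1 + C₂ + C₂ * A / (2 * ξ₁)) := by
  obtain ⟨h₁, h₂⟩ := h
  have hsum : A + 2 * ξ₁ ≠ 0 := by positivity
  convert h₁ using 2
  rw [h₂]
  field_simp
  ring

lemma EqSystem.unique_of_rate_one {A C C₂ ξ₁ ξ₂ η₁ η₂ : ℝ} (hA : 0 < A) (hC : 0 < C)
    (hC₂ : 0 ≤ C₂) (hξ₁ : 0 < ξ₁) (hη₁ : 0 < η₁) (h : EqSystem A C C₂ 1 ξ₁ ξ₂)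
    (h' : EqSystem A C C₂ 1 η₁ η₂) : ξ₁ = η₁ ∧ ξ₂ = η₂ := by
  have not_lt {a b c d : ℝ} (ha : 0 < a) (hab : a < b) (ha' : EqSystem A C C₂ 1 a c)
      (hb' : EqSystem A C C₂ 1 b d) : False := by
    have hdec : C * A / b < C * A / a := div_lt_div_of_pos_left (by positivity) ha hab
    have hinc := GFun_reduced_le hA hC hC₂ ha hab.le
    linarith [ha'.reduced hA ha, hb'.reduced hA (ha.trans hab)]
  obtain hlt | rfl | hgt := lt_trichotomy ξ₁ η₁
  · exact (not_lt hξ₁ hlt h h').elim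
  · exact ⟨rfl, h.2.trans h'.2.symm⟩
  · exact (not_lt hη₁ hgt h' h).elim

theorem stmt_15_general (A C C₂ β β' ξ₁ ξ₂ : ℝ) (hA : 0 < A) (hC : 0 < C) (hC₂ : 0 < C₂)
    (hβ : 0 < β) (hβ' : 0 < β') (hξ₁ : 0 < ξ₁)
    (h : EqSystem A C C₂ β ξ₁ ξ₂) :
    EqSystem A C C₂ β' ξ₁ (β * ξ₂ / β') ∧
    (∀ ξ₁' ξ₂' : ℝ, 0 < ξ₁' → 0 < ξ₂' → EqSystem A C C₂ β' ξ₁' ξ₂' →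
      ξ₁' = ξ₁ ∧ β' * ξ₂' = β * ξ₂) := by
  rw [eqSystem_iff_rate_one hβ.ne'] at h
  refine ⟨?_, fun ξ₁' ξ₂' hξ₁' _ h' => ?_⟩
  · rwa [eqSystem_iff_rate_one hβ'.ne', mul_div_cancel₀ _ hβ'.ne']
  · rw [eqSystem_iff_rate_one hβ'.ne'] at h'
    exact h'.unique_of_rate_one hA hC hC₂.le hξ₁' hξ₁ h

/-- If (ξ₁, ξ₂) solves the equilibrium system at rate β, then
(ξ₁, β·ξ₂/β′) solves it at rate β′. In particular, the equilibrium ξ₁ does not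
depend on β and β·ξ₂ does not depend on β. -/
theorem stmt_15 (A C C₂ β β' ξ₁ ξ₂ : ℝ) (hA : 0 < A) (hC : 0 < C) (hC₂ : 0 < C₂)
    (hβ : 0 < β) (hβ' : 0 < β') (hξ₁ : 0 < ξ₁) (hξ₂ : 0 < ξ₂)
    (h : EqSystem A C C₂ β ξ₁ ξ₂) :
    EqSystem A C C₂ β' ξ₁ (β * ξ₂ / β') ∧
    (∀ ξ₁' ξ₂' : ℝ, 0 < ξ₁' → 0 < ξ₂' → EqSystem A C C₂ β' ξ₁' ξ₂' →
      ξ₁' = ξ₁ ∧ β' * ξ₂' = β * ξ₂) :=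
  stmt_15_general A C C₂ β β' ξ₁ ξ₂ hA hC hC₂ hβ hβ' hξ₁ h
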